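/- Let F : [0,T] → [0,∞) be continuous and suppose there exist λ > 1 and c > 0 such that for all 0 ≤ s ≤ t ≤ T one has ∫_s^t F(s₁)^λ ds₁ ≤ c·(F(s)+1). Then there exists N ≥ 1 and times t₀ = 0 < t₁ < ⋯ < t_N = T such that for all 0 ≤ n ≤ N−1, F(t_n) ≤ 1 + 2^{λ/(λ−1)} · (c/(1 − 2^{−(λ−1)}))^{1/(λ−1)} · t_{n+1}^{−1/(λ−1)}. -/

import Mathlib

/-!
Put `D = 2^{λ/(λ-1)} (c/(1-2^{-(λ-1)}))^{1/(λ-1)}` and build the times greedily, keeping the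
invariant `2 (F tₙ - 1) tₙ^{1/(λ-1)} ≤ D`. If `F tₙ ≤ 1 + D T^{-1/(λ-1)}`, jump to `T`. Otherwise
`y = F tₙ - 1 > 0` and the time `e` with `D e^{-1/(λ-1)} = y` is `< T`, while the invariant gives
`tₙ ≤ 2^{-(λ-1)} e`. Averaging the integral bound over `(tₙ, e]` yields `tₙ₊₁ ∈ (tₙ, e]` with
`F(tₙ₊₁)^λ ≤ c (y + 2) / ((1 - 2^{-(λ-1)}) e) = (y + 2) y^{λ-1} / 2^λ ≤ ((y + 2)/2)^λ`, so `F - 1`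
at least halves from one time to the next, which forces termination, and the invariant persists.
-/

open MeasureTheory Set Real

theorem exists_chain_of_halving {α : Type*} (I : α → Prop) (R : α → α → Prop) (μ : α → ℝ)
    {δ : ℝ} (hδ : 0 < δ) {b : α}
    (hstop : ∀ s, I s → μ s ≤ δ → R s b)
    (hstep : ∀ s, I s → δ < μ s → ∃ u, I u ∧ R s u ∧ μ u ≤ μ s / 2)
    {a : α} (ha : I a) :
    ∃ N, 1 ≤ N ∧ ∃ t : ℕ → α, t 0 = a ∧ t N = b ∧ ∀ n < N, R (t n) (t (n + 1)) := by
  suffices key : ∀ m : ℕ, ∀ s, I s → μ s ≤ 2 ^ m * δ →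
      ∃ N, 1 ≤ N ∧ ∃ t : ℕ → α, t 0 = s ∧ t N = b ∧ ∀ n < N, R (t n) (t (n + 1)) by
    obtain ⟨m, hm⟩ := pow_unbounded_of_one_lt (μ a / δ) one_lt_two
    exact key m a ha ((div_le_iff₀ hδ).1 hm.le)
  intro m
  induction m with
  | zero =>
    intro s hs hμ
    refine ⟨1, le_rfl, fun n ↦ if n = 0 then s else b, rfl, rfl, fun n hn ↦ ?_⟩
    obtain rfl : n = 0 := by omega
    simpa using hstop s hs (by simpa using hμ)
  | succ m ih =>
    intro s hs hμ
    by_cases hsmall : μ s ≤ δ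
    · exact ih s hs (hsmall.trans (le_mul_of_one_le_left hδ.le (one_le_pow₀ one_le_two)))
    obtain ⟨u, hu, hsu, hμu⟩ := hstep s hs (not_le.1 hsmall)
    obtain ⟨N, hN, t, ht0, htN, htR⟩ := ih u hu (by rw [pow_succ] at hμ; linarith)
    refine ⟨N + 1, by omega, fun | 0 => s | n + 1 => t n, rfl, htN, ?_⟩
    rintro (_ | n) hn
    · simpa [ht0] using hsu
    · exact htR n (by omega)

theorem exists_mem_Ioc_le_setIntegral_div {g : ℝ → ℝ} {a b A : ℝ} (hab : a < b)
    (hg : ContinuousOn g (Icc a b)) (hA : ∫ x in Ioc a b, g x ≤ A) :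
    ∃ u ∈ Ioc a b, g u ≤ A / (b - a) := by
  have hvol : volume.real (Ioc a b) = b - a := volume_real_Ioc_of_le hab.le
  obtain ⟨u, hu, hgu⟩ := exists_le_setAverage (μ := volume) (s := Ioc a b) (f := g)
    (by simp [hab]) (by simp) ((hg.integrableOn_Icc).mono_set Ioc_subset_Icc_self)
  refine ⟨u, hu, hgu.trans ?_⟩
  rw [setAverage_eq, hvol, smul_eq_mul, inv_mul_eq_div]
  gcongr

theorem le_one_add_mul_rpow_neg_iff {x D t p : ℝ} (ht : 0 < t) :
    x ≤ 1 + D * t ^ (-p) ↔ (x - 1) * t ^ p ≤ D := by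
  rw [rpow_neg ht.le, ← div_eq_mul_inv, ← sub_le_iff_le_add', le_div_iff₀ (rpow_pos_of_pos ht p)]

theorem le_div_rpow_iff_mul_rpow_le {a y D u : ℝ} (ha : 0 < a) (hy : 0 < y) (hD : 0 ≤ D)
    (hu : 0 ≤ u) : u ≤ (D / y) ^ a ↔ y * u ^ (1 / a) ≤ D := by
  rw [one_div, ← le_div_iff₀' hy, rpow_inv_le_iff_of_pos hu (div_nonneg hD hy.le) ha]

noncomputable def comparisonConst (c lam : ℝ) : ℝ :=
  (2:ℝ) ^ (lam / (lam - 1)) * (c / (1 - (2:ℝ) ^ (-(lam - 1)))) ^ (1 / (lam - 1))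

theorem two_rpow_neg_lt_one {a : ℝ} (ha : 0 < a) : (2:ℝ) ^ (-a) < 1 :=
  rpow_lt_one_of_one_lt_of_neg one_lt_two (neg_lt_zero.2 ha)

section comparisonConst

variable {c lam : ℝ} (hc : 0 < c) (hlam : 1 < lam)
include hc hlam

theorem comparisonConst_pos : 0 < comparisonConst c lam := by
  have := two_rpow_neg_lt_one (sub_pos.2 hlam)
  have : 0 < c / (1 - (2:ℝ) ^ (-(lam - 1))) := div_pos hc (by linarith)
  unfold comparisonConst
  positivity

theorem comparisonConst_rpow :
    comparisonConst c lam ^ (lam - 1) = 2 ^ lam * (c / (1 - (2:ℝ) ^ (-(lam - 1)))) := by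
  have ha : lam - 1 ≠ 0 := (sub_pos.2 hlam).ne'
  have := two_rpow_neg_lt_one (sub_pos.2 hlam)
  have hK : 0 ≤ c / (1 - (2:ℝ) ^ (-(lam - 1))) := (div_pos hc (by linarith)).le
  rw [comparisonConst, mul_rpow (by positivity) (by positivity), ← rpow_mul zero_le_two,
    ← rpow_mul hK, div_mul_cancel₀ _ ha, one_div_mul_cancel ha, rpow_one]

theorem div_comparisonConst_rpow_le {y : ℝ} (hy : 0 < y) :
    c * (y + 2) / ((1 - (2:ℝ) ^ (-(lam - 1))) * (comparisonConst c lam / y) ^ (lam - 1))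
      ≤ ((y + 2) / 2) ^ lam := by
  have := two_rpow_neg_lt_one (sub_pos.2 hlam)
  have hγ : 1 - (2:ℝ) ^ (-(lam - 1)) ≠ 0 := by linarith
  have hy2 : 0 < y + 2 := by linarith
  rw [div_rpow (comparisonConst_pos hc hlam).le hy.le, comparisonConst_rpow hc hlam,
    div_rpow hy2.le zero_le_two]
  calc c * (y + 2) / ((1 - (2:ℝ) ^ (-(lam - 1))) *
        (2 ^ lam * (c / (1 - (2:ℝ) ^ (-(lam - 1)))) / y ^ (lam - 1)))
      = (y + 2) * y ^ (lam - 1) / 2 ^ lam := by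
        field_simp
    _ ≤ (y + 2) * (y + 2) ^ (lam - 1) / 2 ^ lam := by
        gcongr
        linarith
    _ = (y + 2) ^ lam / 2 ^ lam := by
        rw [← rpow_one_add' hy2.le (by linarith), add_sub_cancel]

end comparisonConst

theorem exists_next_time {T c lam : ℝ} (hT : 0 < T) (hc : 0 < c) (hlam : 1 < lam)
    {F : ℝ → ℝ} (hFcont : ContinuousOn F (Icc 0 T)) (hFnonneg : ∀ t ∈ Icc (0:ℝ) T, 0 ≤ F t)
    (hineq : ∀ s t : ℝ, 0 ≤ s → s ≤ t → t ≤ T → ∫ x in Ioc s t, F x ^ lam ≤ c * (F s + 1))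
    {s : ℝ} (hs : 0 ≤ s)
    (hinv : 2 * (F s - 1) * s ^ (1 / (lam - 1)) ≤ comparisonConst c lam)
    (hbig : comparisonConst c lam < (F s - 1) * T ^ (1 / (lam - 1))) :
    ∃ u, (0 ≤ u ∧ u < T ∧ 2 * (F u - 1) * u ^ (1 / (lam - 1)) ≤ comparisonConst c lam) ∧
      (s < u ∧ F s ≤ 1 + comparisonConst c lam * u ^ (-(1 / (lam - 1)))) ∧
      F u - 1 ≤ (F s - 1) / 2 := by
  set D := comparisonConst c lam
  set y := F s - 1
  have ha : 0 < lam - 1 := sub_pos.2 hlam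
  have hD : 0 < D := comparisonConst_pos hc hlam
  have hy : 0 < y := by
    by_contra! hy
    nlinarith [rpow_nonneg hT.le (1 / (lam - 1))]
  set e := (D / y) ^ (lam - 1)
  have heT : e < T := lt_of_not_ge fun h ↦
    hbig.not_ge ((le_div_rpow_iff_mul_rpow_le ha hy hD.le hT.le).1 h)
  have hse : s ≤ 2 ^ (-(lam - 1)) * e := calc
    s ≤ (D / (2 * y)) ^ (lam - 1) :=
      (le_div_rpow_iff_mul_rpow_le ha (by positivity) hD.le hs).2 hinv
    _ = 2 ^ (-(lam - 1)) * e := by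
      rw [div_mul_eq_div_div_swap, div_rpow (by positivity) zero_le_two, rpow_neg zero_le_two,
        div_eq_inv_mul]
  have hγ := two_rpow_neg_lt_one ha
  have hse' : s < e := hse.trans_lt (mul_lt_of_lt_one_left (by positivity) hγ)
  obtain ⟨u, ⟨hsu, hue⟩, hu⟩ := exists_mem_Ioc_le_setIntegral_div (g := fun x ↦ F x ^ lam)
    hse' ((hFcont.mono (Icc_subset_Icc hs heT.le)).rpow_const fun _ _ ↦ Or.inr (by linarith))
    (hineq s e hs hse'.le heT.le)
  have hu0 : 0 ≤ u := hs.trans hsu.le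
  have hFu : F u - 1 ≤ y / 2 := by
    have hpow : F u ^ lam ≤ ((y + 2) / 2) ^ lam := calc
      F u ^ lam ≤ c * (F s + 1) / (e - s) := hu
      _ ≤ c * (y + 2) / ((1 - 2 ^ (-(lam - 1))) * e) := by
        rw [show F s + 1 = y + 2 by ring]
        gcongr
        linarith
      _ ≤ ((y + 2) / 2) ^ lam := div_comparisonConst_rpow_le hc hlam hy
    have := (rpow_le_rpow_iff (hFnonneg u ⟨hu0, hue.trans heT.le⟩) (by positivity)
      (by linarith)).1 hpow
    linarith
  have hyu : y * u ^ (1 / (lam - 1)) ≤ D := (le_div_rpow_iff_mul_rpow_le ha hy hD.le hu0).1 hue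
  refine ⟨u, ⟨hu0, hue.trans_lt heT, ?_⟩,
    ⟨hsu, (le_one_add_mul_rpow_neg_iff (hs.trans_lt hsu)).2 hyu⟩, hFu⟩
  nlinarith [rpow_nonneg hu0 (1 / (lam - 1))]

/-- Mourrat–Weber type comparison test (Proposition A.2 of the paper). -/
theorem comparison_test
    (T c lam : ℝ) (hT : 0 < T) (hc : 0 < c) (hlam : 1 < lam)
    (F : ℝ → ℝ) (hFcont : ContinuousOn F (Set.Icc 0 T))
    (hFnonneg : ∀ t ∈ Set.Icc (0:ℝ) T, 0 ≤ F t)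
    (hineq : ∀ s t : ℝ, 0 ≤ s → s ≤ t → t ≤ T →
      (∫ x in Set.Ioc s t, F x ^ lam) ≤ c * (F s + 1)) :
    ∃ N : ℕ, 1 ≤ N ∧ ∃ tt : ℕ → ℝ, tt 0 = 0 ∧ tt N = T ∧
      (∀ n < N, tt n < tt (n + 1)) ∧
      (∀ n < N, F (tt n) ≤ 1 + (2:ℝ) ^ (lam / (lam - 1)) *
        (c / (1 - (2:ℝ) ^ (-(lam - 1)))) ^ (1 / (lam - 1)) *
        tt (n + 1) ^ (-(1 / (lam - 1)))) := by
  obtain ⟨N, hN, tt, h0, hNT, hstep⟩ := exists_chain_of_halving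
    (fun s ↦ 0 ≤ s ∧ s < T ∧ 2 * (F s - 1) * s ^ (1 / (lam - 1)) ≤ comparisonConst c lam)
    (fun s u ↦ s < u ∧ F s ≤ 1 + comparisonConst c lam * u ^ (-(1 / (lam - 1))))
    (fun s ↦ F s - 1) (mul_pos (comparisonConst_pos hc hlam) (rpow_pos_of_pos hT _))
    (fun _ ⟨_, hsT, _⟩ hsmall ↦ ⟨hsT, by linarith⟩)
    (fun _ ⟨hs, _, hinv⟩ hbig ↦ exists_next_time hT hc hlam hFcont hFnonneg hineq hs hinv
      (lt_of_not_ge ((le_one_add_mul_rpow_neg_iff hT).not.1 (by linarith))))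
    ⟨le_rfl, hT, by
      rw [zero_rpow (one_div_pos.2 (sub_pos.2 hlam)).ne', mul_zero]
      exact (comparisonConst_pos hc hlam).le⟩
  exact ⟨N, hN, tt, h0, hNT, fun n hn ↦ (hstep n hn).1, fun n hn ↦ (hstep n hn).2⟩
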